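/- arXiv:1605.06841 — 5 statements merged into one kernel-verified Lean document; each statement's English description precedes it below -/
import Mathlib

section
/- Let δ ∈ (0,1), γ₀ ≥ 1, k ∈ ℤ \ {0}, and consider the Volterra equation ρ̂(t,k) = H(t,k) + δ ∫₀ᵗ |k|^{1−γ₀}(t−τ) e^{−|k|(t−τ)} ρ̂(τ,k) dτ (gravitational case, W ̂(k) = −|k|^{−1−γ₀}, f̂⁰(ξ) = 2π e^{−|ξ|} times δ). Then the unique solution is ρ̂(t,k) = H(t,k) + ∫₀ᵗ √δ |k|^{(1−γ₀)/2} sinh(√δ |k|^{(1−γ₀)/2}(t−s)) e^{−|k|(t−s)} H(s,k) ds. -/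
open MeasureTheory Real intervalIntegral

/-!
Write `K ⋆ f` for `t ↦ ∫₀ᵗ K (t - s) f s ds`, `b = |k|` and `a = √δ |k|^{(1-γ₀)/2}`, so that
`δ |k|^{1-γ₀} = a²`. Both kernels carry the factor `e^{-bx}`, and multiplying every function
by `e^{bt}` removes it: the claim becomes that `u = h + (a sinh(a·)) ⋆ h` solves
`u = h + a² (x ↦ x) ⋆ u`, and that `v = a² (x ↦ x) ⋆ v` forces `v = 0`.

Kernels built from `e^{±ax}` and `x` can be differentiated under the integral by separating
`t` from `s`. Thus `S = sinh(a·) ⋆ h` and `C = cosh(a·) ⋆ h` satisfy `S' = aC`, `C' = h + aS`,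
and `W = (x ↦ x) ⋆ u` satisfies `W'' = u`. Hence `y = aS - a²W` solves `y'' = 0`, while for a
solution `v` of the homogeneous equation `y = (x ↦ x) ⋆ v` solves `y'' = a²y`. In both cases
`y(0) = y'(0) = 0`, so uniqueness for linear ODEs gives `y = 0` on `[0, ∞)`.
-/

theorem eq_zero_of_hasDerivAt_of_hasDerivAt_smul {E : Type*} [NormedAddCommGroup E]
    [NormedSpace ℝ E] {c : ℝ} {w w' : ℝ → E} (hw : ∀ t, HasDerivAt w (w' t) t)
    (hw' : ∀ t, 0 ≤ t → HasDerivAt w' (c • w t) t) (h₀ : w 0 = 0) (h₀' : w' 0 = 0)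
    {t : ℝ} (ht : 0 ≤ t) : w t = 0 := by
  let L : E × E →L[ℝ] E × E :=
    (ContinuousLinearMap.snd ℝ E E).prod (c • ContinuousLinearMap.fst ℝ E E)
  have hsol : Set.EqOn (fun s => (w s, w' s)) 0 (Set.Icc 0 t) := by
    refine ODE_solution_unique (v := fun _ => L) (fun _ => L.lipschitz) ?_ (fun s hs => ?_)
      continuousOn_const (fun s _ => ?_) (by simp [h₀, h₀'])
    · exact (continuous_iff_continuousAt.2 fun s => (hw s).continuousAt).continuousOn.prodMk
        fun s hs => (hw' s hs.1).continuousAt.continuousWithinAt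
    · exact ((hw s).prodMk (hw' s hs.1)).hasDerivWithinAt
    · simpa [Pi.zero_def] using hasDerivWithinAt_const s (Set.Ici s) (0 : E × E)
  exact congrArg Prod.fst (hsol ⟨ht, le_rfl⟩)

theorem ofReal_exp_mul_ofReal_exp_neg (b s : ℝ) :
    (Real.exp (b * s) : ℂ) * Real.exp (-b * s) = 1 := by
  rw [← Complex.ofReal_mul, ← Real.exp_add]
  simp

noncomputable def volterraConv (K : ℝ → ℝ) (f : ℝ → ℂ) (t : ℝ) : ℂ :=
  ∫ s in (0:ℝ)..t, (K (t - s) : ℂ) * f s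

namespace volterraConv

variable {K : ℝ → ℝ} {f g : ℝ → ℂ}

@[simp]
theorem apply_zero (K : ℝ → ℝ) (f : ℝ → ℂ) : volterraConv K f 0 = 0 :=
  integral_same

theorem continuous (hK : Continuous K) (hf : Continuous f) : Continuous (volterraConv K f) := by
  unfold volterraConv
  fun_prop

theorem sub_apply (hK : Continuous K) (hf : Continuous f) (hg : Continuous g) (t : ℝ) :
    volterraConv K (f - g) t = volterraConv K f t - volterraConv K g t := by
  simp only [volterraConv, Pi.sub_apply, mul_sub]
  exact intervalIntegral.integral_sub ((by fun_prop : Continuous _).intervalIntegrable _ _)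
    ((by fun_prop : Continuous _).intervalIntegrable _ _)

theorem const_mul (r : ℝ) (K : ℝ → ℝ) (f : ℝ → ℂ) (t : ℝ) :
    volterraConv (fun x => r * K x) f t = r * volterraConv K f t := by
  simp only [volterraConv, ← intervalIntegral.integral_const_mul, Complex.ofReal_mul, mul_assoc]

theorem mul_exp (K : ℝ → ℝ) (b : ℝ) (f : ℝ → ℂ) (t : ℝ) :
    volterraConv (fun x => K x * Real.exp (-b * x)) f t
      = Real.exp (-b * t) * volterraConv K (fun s => Real.exp (b * s) * f s) t := by
  simp only [volterraConv, ← intervalIntegral.integral_const_mul]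
  refine integral_congr fun s _ => ?_
  have hsplit : Real.exp (-b * (t - s)) = Real.exp (-b * t) * Real.exp (b * s) := by
    rw [← Real.exp_add]
    ring_nf
  simp only [hsplit, Complex.ofReal_mul]
  ring

theorem hasDerivAt_exp (c : ℝ) (hf : Continuous f) (t : ℝ) :
    HasDerivAt (volterraConv (fun x => Real.exp (c * x)) f)
      (f t + c * volterraConv (fun x => Real.exp (c * x)) f t) t := by
  have hsep : volterraConv (fun x => Real.exp (c * x)) f
      = fun t => (Real.exp (c * t) : ℂ) * ∫ s in (0:ℝ)..t, (Real.exp (-c * s) : ℂ) * f s := by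
    ext t
    simpa [volterraConv] using mul_exp (fun _ => 1) (-c) f t
  have hexp : HasDerivAt (fun t => (Real.exp (c * t) : ℂ)) (c * Real.exp (c * t) : ℝ) t := by
    simpa [mul_comm] using (((hasDerivAt_id t).const_mul c).exp).ofReal_comp
  have hint := ((by fun_prop : Continuous fun s => (Real.exp (-c * s) : ℂ) * f s)
    |>.integral_hasStrictDerivAt 0 t).hasDerivAt
  rw [hsep]
  refine (hexp.mul hint).congr_deriv ?_
  simp only [Complex.ofReal_mul]
  linear_combination (f t) * ofReal_exp_mul_ofReal_exp_neg c t

theorem sinh_eq (a : ℝ) (hf : Continuous f) (t : ℝ) :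
    volterraConv (fun x => Real.sinh (a * x)) f t = (volterraConv (fun x => Real.exp (a * x)) f t
      - volterraConv (fun x => Real.exp (-a * x)) f t) / 2 := by
  simp only [volterraConv]
  rw [← intervalIntegral.integral_sub ((by fun_prop : Continuous _).intervalIntegrable _ _)
    ((by fun_prop : Continuous _).intervalIntegrable _ _), ← intervalIntegral.integral_div]
  refine integral_congr fun s _ => ?_
  simp only [Real.sinh_eq, neg_mul, Complex.ofReal_div, Complex.ofReal_sub]
  push_cast
  ring

theorem cosh_eq (a : ℝ) (hf : Continuous f) (t : ℝ) :
    volterraConv (fun x => Real.cosh (a * x)) f t = (volterraConv (fun x => Real.exp (a * x)) f t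
      + volterraConv (fun x => Real.exp (-a * x)) f t) / 2 := by
  simp only [volterraConv]
  rw [← intervalIntegral.integral_add ((by fun_prop : Continuous _).intervalIntegrable _ _)
    ((by fun_prop : Continuous _).intervalIntegrable _ _), ← intervalIntegral.integral_div]
  refine integral_congr fun s _ => ?_
  simp only [Real.cosh_eq, neg_mul, Complex.ofReal_div, Complex.ofReal_add]
  push_cast
  ring

theorem hasDerivAt_sinh (a : ℝ) (hf : Continuous f) (t : ℝ) :
    HasDerivAt (volterraConv (fun x => Real.sinh (a * x)) f)
      (a * volterraConv (fun x => Real.cosh (a * x)) f t) t := by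
  rw [funext (sinh_eq a hf), cosh_eq a hf]
  refine (((hasDerivAt_exp a hf t).sub (hasDerivAt_exp (-a) hf t)).div_const 2).congr_deriv ?_
  push_cast
  ring

theorem hasDerivAt_cosh (a : ℝ) (hf : Continuous f) (t : ℝ) :
    HasDerivAt (volterraConv (fun x => Real.cosh (a * x)) f)
      (f t + a * volterraConv (fun x => Real.sinh (a * x)) f t) t := by
  rw [funext (cosh_eq a hf), sinh_eq a hf]
  refine (((hasDerivAt_exp a hf t).add (hasDerivAt_exp (-a) hf t)).div_const 2).congr_deriv ?_
  push_cast
  ring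

theorem hasDerivAt_id (hf : Continuous f) (t : ℝ) :
    HasDerivAt (volterraConv (fun x => x) f) (∫ s in (0:ℝ)..t, f s) t := by
  have hsep : volterraConv (fun x => x) f
      = fun t : ℝ => (t : ℂ) * (∫ s in (0:ℝ)..t, f s) - ∫ s in (0:ℝ)..t, (s : ℂ) * f s := by
    ext t
    simp only [volterraConv]
    rw [← intervalIntegral.integral_const_mul, ← intervalIntegral.integral_sub
      ((by fun_prop : Continuous _).intervalIntegrable _ _)
      ((by fun_prop : Continuous _).intervalIntegrable _ _)]
    refine integral_congr fun s _ => ?_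
    push_cast
    ring
  have hF := (hf.integral_hasStrictDerivAt 0 t).hasDerivAt
  have hG := ((by fun_prop : Continuous fun s : ℝ => (s : ℂ) * f s)
    |>.integral_hasStrictDerivAt 0 t).hasDerivAt
  rw [hsep]
  refine (((_root_.hasDerivAt_id t).ofReal_comp.mul hF).sub hG).congr_deriv ?_
  simp

theorem sinh_resolvent (a : ℝ) (hf : Continuous f) {t : ℝ} (ht : 0 ≤ t) :
    volterraConv (fun x => a * Real.sinh (a * x)) f t = volterraConv (fun x => a ^ 2 * x)
      (fun s => f s + volterraConv (fun x => a * Real.sinh (a * x)) f s) t := by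
  set S := volterraConv (fun x => Real.sinh (a * x)) f
  set C := volterraConv (fun x => Real.cosh (a * x)) f
  set u := fun s => f s + a * S s
  have hu : Continuous u := by
    have := volterraConv.continuous (K := fun x => Real.sinh (a * x)) (by fun_prop) hf
    fun_prop
  have hvanish : a * S t - a ^ 2 * volterraConv (fun x => x) u t = 0 := by
    refine eq_zero_of_hasDerivAt_of_hasDerivAt_smul (c := 0)
      (w := fun t => a * S t - a ^ 2 * volterraConv (fun x => x) u t)
      (w' := fun t => a ^ 2 * C t - a ^ 2 * ∫ s in (0:ℝ)..t, u s) (fun t => ?_) (fun t _ => ?_)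
      (by simp [S]) (by simp [C]) ht
    · refine (((hasDerivAt_sinh a hf t).const_mul (a : ℂ)).sub
        ((hasDerivAt_id hu t).const_mul ((a : ℂ) ^ 2))).congr_deriv ?_
      ring
    · refine (((hasDerivAt_cosh a hf t).const_mul ((a : ℂ) ^ 2)).sub
        ((hu.integral_hasStrictDerivAt 0 t).hasDerivAt.const_mul ((a : ℂ) ^ 2))).congr_deriv ?_
      simp only [u, zero_smul]
      ring
  simp only [const_mul]
  rw [const_mul (a ^ 2) (fun x => x), Complex.ofReal_pow]
  linear_combination hvanish

theorem eq_zero_of_eq_sq_mul_id (a : ℝ) (hg : Continuous g)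
    (hsol : ∀ s, 0 ≤ s → g s = volterraConv (fun x => a ^ 2 * x) g s) {t : ℝ} (ht : 0 ≤ t) :
    g t = 0 := by
  have hvanish : volterraConv (fun x => x) g t = 0 := by
    refine eq_zero_of_hasDerivAt_of_hasDerivAt_smul (c := a ^ 2)
      (w' := fun t => ∫ s in (0:ℝ)..t, g s) (hasDerivAt_id hg) (fun s hs => ?_)
      (by simp) (by simp) ht
    refine (hg.integral_hasStrictDerivAt 0 s).hasDerivAt.congr_deriv ?_
    rw [hsol s hs, const_mul (a ^ 2) (fun x => x), Complex.real_smul]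
  rw [hsol t ht, const_mul (a ^ 2) (fun x => x), hvanish, mul_zero]

theorem resolvent (a b : ℝ) (hf : Continuous f) {t : ℝ} (ht : 0 ≤ t) :
    volterraConv (fun x => a * Real.sinh (a * x) * Real.exp (-b * x)) f t
      = volterraConv (fun x => a ^ 2 * x * Real.exp (-b * x)) (fun s =>
          f s + volterraConv (fun x => a * Real.sinh (a * x) * Real.exp (-b * x)) f s) t := by
  set h := fun s => (Real.exp (b * s) : ℂ) * f s
  have hshift : (fun s => (Real.exp (b * s) : ℂ) *
        (f s + volterraConv (fun x => a * Real.sinh (a * x) * Real.exp (-b * x)) f s))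
      = fun s => h s + volterraConv (fun x => a * Real.sinh (a * x)) h s := by
    ext s
    rw [mul_exp, mul_add, ← mul_assoc, ofReal_exp_mul_ofReal_exp_neg, one_mul]
  rw [mul_exp, mul_exp, hshift, sinh_resolvent a (by fun_prop) ht]

theorem eq_zero_of_eq (a b : ℝ) (hg : Continuous g)
    (hsol : ∀ s, 0 ≤ s → g s = volterraConv (fun x => a ^ 2 * x * Real.exp (-b * x)) g s)
    {t : ℝ} (ht : 0 ≤ t) : g t = 0 := by
  have hvanish := eq_zero_of_eq_sq_mul_id (g := fun s => (Real.exp (b * s) : ℂ) * g s) a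
    (by fun_prop) (fun s hs => by
      rw [hsol s hs, mul_exp, ← mul_assoc, ofReal_exp_mul_ofReal_exp_neg, one_mul]) ht
  simpa [Real.exp_ne_zero] using hvanish

end volterraConv

theorem volterra_gravitational_general
    (δ γ₀ : ℝ) (hδ : 0 < δ)
    (k : ℤ) (H : ℝ → ℂ) (hH : Continuous H)
    (ρ : ℝ → ℂ)
    (hρ : ∀ t : ℝ, ρ t = H t + ∫ s in (0:ℝ)..t,
        ((Real.sqrt δ * |(k : ℝ)| ^ ((1 - γ₀) / 2) *
          Real.sinh (Real.sqrt δ * |(k : ℝ)| ^ ((1 - γ₀) / 2) * (t - s)) *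
          Real.exp (-|(k : ℝ)| * (t - s)) : ℝ) : ℂ) * H s) :
    (∀ t : ℝ, 0 ≤ t →
      ρ t = H t + (δ : ℂ) * ∫ τ in (0:ℝ)..t,
        ((|(k : ℝ)| ^ (1 - γ₀) * (t - τ) * Real.exp (-|(k : ℝ)| * (t - τ)) : ℝ) : ℂ) * ρ τ)
    ∧
    (∀ ρ' : ℝ → ℂ, Continuous ρ' →
      (∀ t : ℝ, 0 ≤ t →
        ρ' t = H t + (δ : ℂ) * ∫ τ in (0:ℝ)..t,
          ((|(k : ℝ)| ^ (1 - γ₀) * (t - τ) * Real.exp (-|(k : ℝ)| * (t - τ)) : ℝ) : ℂ) * ρ' τ) →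
      ∀ t : ℝ, 0 ≤ t → ρ' t = ρ t) := by
  set b := |(k : ℝ)|
  set a := Real.sqrt δ * b ^ ((1 - γ₀) / 2)
  have ha : δ * b ^ (1 - γ₀) = a ^ 2 := by
    rw [mul_pow, Real.sq_sqrt hδ.le, ← Real.rpow_natCast,
      ← Real.rpow_mul (show 0 ≤ b from abs_nonneg _)]
    norm_num
  have hkernel (f : ℝ → ℂ) (t : ℝ) :
      (δ : ℂ) * ∫ τ in (0:ℝ)..t, ((b ^ (1 - γ₀) * (t - τ) * Real.exp (-b * (t - τ)) : ℝ) : ℂ) * f τ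
        = volterraConv (fun x => a ^ 2 * x * Real.exp (-b * x)) f t := by
    change (δ : ℂ) * volterraConv (fun x => b ^ (1 - γ₀) * x * Real.exp (-b * x)) f t = _
    rw [← volterraConv.const_mul, ← ha]
    simp only [mul_assoc]
  have hρv : ρ = fun t =>
      H t + volterraConv (fun x => a * Real.sinh (a * x) * Real.exp (-b * x)) H t := funext hρ
  have hρc : Continuous ρ := hρv ▸ hH.add (volterraConv.continuous (by fun_prop) hH)
  have hsolves (t : ℝ) (ht : 0 ≤ t) :
      ρ t = H t + volterraConv (fun x => a ^ 2 * x * Real.exp (-b * x)) ρ t := by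
    rw [hρv]
    exact congrArg (H t + ·) (volterraConv.resolvent a b hH ht)
  refine ⟨fun t ht => by rw [hkernel, hsolves t ht], fun ρ' hρ'c hρ' t ht => ?_⟩
  refine sub_eq_zero.1 (volterraConv.eq_zero_of_eq a b (hρ'c.sub hρc) (fun s hs => ?_) ht)
  rw [volterraConv.sub_apply (by fun_prop) hρ'c hρc, Pi.sub_apply, hρ' s hs, hkernel, hsolves s hs]
  ring

/-- Resolvent formula for the Volterra equation in the gravitational case:
`ρ̂(t,k) = H(t,k) + δ ∫₀ᵗ |k|^{1-γ₀}(t-τ) e^{-|k|(t-τ)} ρ̂(τ,k) dτ`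
has unique (continuous) solution
`ρ̂(t,k) = H(t,k) + ∫₀ᵗ √δ |k|^{(1-γ₀)/2} sinh(√δ |k|^{(1-γ₀)/2}(t-s)) e^{-|k|(t-s)} H(s,k) ds`. -/
theorem volterra_gravitational
    (δ γ₀ : ℝ) (hδ : 0 < δ) (hδ1 : δ < 1) (hγ : 1 ≤ γ₀)
    (k : ℤ) (hk : k ≠ 0) (H : ℝ → ℂ) (hH : Continuous H)
    (ρ : ℝ → ℂ)
    (hρ : ∀ t : ℝ, ρ t = H t + ∫ s in (0:ℝ)..t,
        ((Real.sqrt δ * |(k : ℝ)| ^ ((1 - γ₀) / 2) *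
          Real.sinh (Real.sqrt δ * |(k : ℝ)| ^ ((1 - γ₀) / 2) * (t - s)) *
          Real.exp (-|(k : ℝ)| * (t - s)) : ℝ) : ℂ) * H s) :
    (∀ t : ℝ, 0 ≤ t →
      ρ t = H t + (δ : ℂ) * ∫ τ in (0:ℝ)..t,
        ((|(k : ℝ)| ^ (1 - γ₀) * (t - τ) * Real.exp (-|(k : ℝ)| * (t - τ)) : ℝ) : ℂ) * ρ τ)
    ∧
    (∀ ρ' : ℝ → ℂ, Continuous ρ' →
      (∀ t : ℝ, 0 ≤ t →
        ρ' t = H t + (δ : ℂ) * ∫ τ in (0:ℝ)..t,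
          ((|(k : ℝ)| ^ (1 - γ₀) * (t - τ) * Real.exp (-|(k : ℝ)| * (t - τ)) : ℝ) : ℂ) * ρ' τ) →
      ∀ t : ℝ, 0 ≤ t → ρ' t = ρ t) :=
  volterra_gravitational_general δ γ₀ hδ k H hH ρ hρ
end

section
/- Fix K̃ > 0, η > 0 and let Ñ = ⌊(K̃ ε η)^{1/3}⌋ for ε > 0. Define Y₁(η) = ∏_{j=1}^{Ñ} (ε K̃ η / j³) = (K̃ ε η)^{Ñ} / (Ñ!)³. Then if ε η is sufficiently large relative to K̃, there holds Y₁(η) ≈ (K̃ ε η)^{−1/2} e^{3(K̃ ε)^{1/3} η^{1/3}}, with implicit constants independent of ε, η, K̃. Moreover Y_k(η) ≤ Y₁(η) for every 1 ≤ k ≤ Ñ, where Y_k(η) = ∏_{j=k+1}^{Ñ}(ε K̃ η / j³). -/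
open Real Finset
open scoped Nat

/-!
With `t = (K̃εη)^{1/3}` and `N = ⌊t⌋`, the product is `Y₁ = (t^N / N!)^3`, the cube of the largest
term of the series of `e^t`. Stirling's bounds `√(2πN) (N/e)^N ≤ N! ≤ e √N (N/e)^N` reduce
`t^N / N!` to `(e t / N)^N` up to a factor `√N ≍ √t`, and `e^N ≤ (e t / N)^N ≤ e^t` because
`N ≤ t` and `e u ≤ e^u`. As `t - 1 < N`, this gives `e^{-2} e^t / √t ≤ t^N / N! ≤ e^t / √t`;
cubing yields the two-sided bound with `c = e^{-6}`, `C = 1`. Finally `Y_k ≤ Y₁` since every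
factor `t^3 / j^3` with `j ≤ N ≤ t` is at least one.
-/

theorem Stirling.factorial_le_exp_one_mul_sqrt {n : ℕ} (hn : n ≠ 0) :
    (n ! : ℝ) ≤ exp 1 * √n * (n / exp 1) ^ n := by
  obtain ⟨m, rfl⟩ := Nat.exists_eq_succ_of_ne_zero hn
  have hseq : stirlingSeq (m + 1) ≤ exp 1 / √2 := by
    simpa [stirlingSeq_one] using stirlingSeq'_antitone (Nat.zero_le m)
  have hpos : 0 < √(2 * (m + 1 : ℕ)) * (((m + 1 : ℕ) : ℝ) / exp 1) ^ (m + 1) := by positivity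
  rw [stirlingSeq, div_le_iff₀ hpos] at hseq
  refine hseq.trans_eq ?_
  rw [sqrt_mul zero_le_two]
  field_simp

theorem exp_one_mul_div_pow_le_exp {t : ℝ} (ht : 0 ≤ t) {n : ℕ} (hn : n ≠ 0) :
    (exp 1 * t / n) ^ n ≤ exp t := by
  have hn' : (0 : ℝ) < n := by positivity
  -- `e u ≤ e^u` is `add_one_le_exp` at `u - 1`
  have hbase : exp 1 * t / n ≤ exp (t / n) := by
    have := add_one_le_exp (t / n - 1)
    rw [exp_sub, le_div_iff₀ (exp_pos 1), sub_add_cancel, mul_comm] at this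
    rwa [mul_div_assoc]
  calc (exp 1 * t / n) ^ n ≤ exp (t / n) ^ n := by gcongr
    _ = exp t := by rw [← exp_nat_mul, mul_div_cancel₀ _ hn'.ne']

theorem exp_le_exp_one_mul_div_pow {t : ℝ} {n : ℕ} (hnt : (n : ℝ) ≤ t) (hn : n ≠ 0) :
    exp n ≤ (exp 1 * t / n) ^ n := by
  have hn' : (0 : ℝ) < n := by positivity
  calc exp n = exp 1 ^ n := by rw [← exp_nat_mul, mul_one]
    _ ≤ (exp 1 * t / n) ^ n := by
      gcongr
      rw [le_div_iff₀ hn']; gcongr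

theorem pow_floor_div_factorial_le {t : ℝ} (ht : 1 ≤ t) :
    t ^ ⌊t⌋₊ / (⌊t⌋₊ ! : ℝ) ≤ exp t / √t := by
  set n := ⌊t⌋₊
  have hn : n ≠ 0 := (Nat.floor_pos.2 ht).ne'
  have hn1 : (1 : ℝ) ≤ n := by exact_mod_cast Nat.one_le_iff_ne_zero.2 hn
  -- `t < n + 1 ≤ 2 n`
  have hsqrt : √t ≤ √(2 * π * n) := by
    gcongr
    nlinarith [Nat.lt_floor_add_one t, pi_gt_three]
  calc t ^ n / (n ! : ℝ) ≤ t ^ n / (√(2 * π * n) * (n / exp 1) ^ n) := by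
        gcongr
        exact Stirling.le_factorial_stirling n
    _ = (exp 1 * t / n) ^ n / √(2 * π * n) := by
        rw [mul_comm, ← div_div, ← div_pow]
        field_simp
    _ ≤ exp t / √t := by
        gcongr
        exact exp_one_mul_div_pow_le_exp (by linarith) hn

theorem exp_neg_two_mul_le_pow_floor_div_factorial {t : ℝ} (ht : 1 ≤ t) :
    exp (-2) * (exp t / √t) ≤ t ^ ⌊t⌋₊ / (⌊t⌋₊ ! : ℝ) := by
  set n := ⌊t⌋₊
  have hn : n ≠ 0 := (Nat.floor_pos.2 ht).ne'
  have hn' : (0 : ℝ) < n := by positivity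
  have hnt : (n : ℝ) ≤ t := Nat.floor_le (by linarith)
  have hexp : exp t ≤ exp 1 * exp n := by
    rw [← exp_add]; gcongr; linarith [Nat.lt_floor_add_one t]
  calc exp (-2) * (exp t / √t) ≤ exp (-2) * (exp 1 * exp n / √n) := by gcongr
    _ ≤ exp (-2) * (exp 1 * (exp 1 * t / n) ^ n / √n) := by
        gcongr; exact exp_le_exp_one_mul_div_pow hnt hn
    _ = t ^ n / (exp 1 * √n * (n / exp 1) ^ n) := by
        rw [show exp (-2) = (exp 1 * exp 1)⁻¹ by rw [← exp_add, ← exp_neg]; norm_num]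
        field_simp
        rw [← mul_pow]
        field_simp
    _ ≤ t ^ n / (n ! : ℝ) := by
        gcongr
        exact Stirling.factorial_le_exp_one_mul_sqrt hn

theorem prod_Icc_div_pow (a : ℝ) (n k : ℕ) :
    ∏ j ∈ Icc 1 n, a / (j : ℝ) ^ k = a ^ n / (n ! : ℝ) ^ k := by
  rw [prod_div_distrib, prod_const, Nat.card_Icc, Nat.add_sub_cancel, prod_pow, ← Nat.cast_prod,
    ← Ico_add_one_right_eq_Icc, prod_Ico_id_eq_factorial]

theorem exp_div_sqrt_rpow_third_pow_three {x : ℝ} (hx : 0 < x) :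
    (exp (x ^ ((1:ℝ)/3)) / √(x ^ ((1:ℝ)/3))) ^ 3 = x ^ (-(1:ℝ)/2) * exp (3 * x ^ ((1:ℝ)/3)) := by
  have hsqrt : √(x ^ ((1:ℝ)/3)) ^ 3 = x ^ ((1:ℝ)/2) := by
    rw [sqrt_eq_rpow, ← rpow_natCast, ← rpow_mul (by positivity), ← rpow_mul hx.le]
    norm_num
  rw [div_pow, hsqrt, ← exp_nat_mul, neg_div, rpow_neg hx.le]
  push_cast
  ring

/-- Echo-cascade growth factor: with `Ñ = ⌊(K̃εη)^{1/3}⌋` and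
`Y₁ = ∏_{j=1}^{Ñ} (εK̃η/j³)`, for `εη` sufficiently large relative to `K̃`,
`Y₁ ≈ (K̃εη)^{-1/2} e^{3(K̃ε)^{1/3} η^{1/3}}` with universal constants,
and `Y_k = ∏_{j=k+1}^{Ñ} (εK̃η/j³) ≤ Y₁` for all `1 ≤ k ≤ Ñ`. -/
theorem echo_growth_factor :
    ∃ c C : ℝ, 0 < c ∧ 0 < C ∧
      ∀ Ktil : ℝ, 0 < Ktil → ∃ M : ℝ, ∀ ε η : ℝ, 0 < ε → 0 < η → M ≤ ε * η →
        (c * ((Ktil * ε * η) ^ (-(1:ℝ)/2) *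
              Real.exp (3 * (Ktil * ε) ^ ((1:ℝ)/3) * η ^ ((1:ℝ)/3)))
            ≤ ∏ j ∈ Finset.Icc 1 (Nat.floor ((Ktil * ε * η) ^ ((1:ℝ)/3))),
                (ε * Ktil * η / (j : ℝ) ^ 3))
        ∧ ((∏ j ∈ Finset.Icc 1 (Nat.floor ((Ktil * ε * η) ^ ((1:ℝ)/3))),
                (ε * Ktil * η / (j : ℝ) ^ 3))
            ≤ C * ((Ktil * ε * η) ^ (-(1:ℝ)/2) *
                Real.exp (3 * (Ktil * ε) ^ ((1:ℝ)/3) * η ^ ((1:ℝ)/3))))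
        ∧ (∀ k : ℕ, 1 ≤ k → k ≤ Nat.floor ((Ktil * ε * η) ^ ((1:ℝ)/3)) →
            (∏ j ∈ Finset.Icc (k+1) (Nat.floor ((Ktil * ε * η) ^ ((1:ℝ)/3))),
                (ε * Ktil * η / (j : ℝ) ^ 3))
              ≤ ∏ j ∈ Finset.Icc 1 (Nat.floor ((Ktil * ε * η) ^ ((1:ℝ)/3))),
                  (ε * Ktil * η / (j : ℝ) ^ 3)) := by
  refine ⟨exp (-6), 1, exp_pos _, one_pos, fun Ktil hK => ⟨1 / Ktil, fun ε η hε hη hM => ?_⟩⟩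
  set x := Ktil * ε * η
  have hx : 1 ≤ x := by
    rw [div_le_iff₀ hK] at hM
    linarith
  set t := x ^ ((1:ℝ)/3)
  have ht : 1 ≤ t := one_le_rpow hx (by norm_num)
  have ht3 : t ^ 3 = x := by
    rw [← rpow_natCast, ← rpow_mul (by linarith)]
    norm_num
  have hscale : x ^ (-(1:ℝ)/2) * exp (3 * (Ktil * ε) ^ ((1:ℝ)/3) * η ^ ((1:ℝ)/3)) =
      (exp t / √t) ^ 3 := by
    rw [mul_assoc 3, ← mul_rpow (by positivity) hη.le, exp_div_sqrt_rpow_third_pow_three]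
    linarith
  have hfactor (j : ℕ) : ε * Ktil * η / (j : ℝ) ^ 3 = t ^ 3 / (j : ℝ) ^ 3 := by
    rw [ht3, mul_comm ε]
  have hY : ∏ j ∈ Icc 1 ⌊t⌋₊, t ^ 3 / (j : ℝ) ^ 3 = (t ^ ⌊t⌋₊ / (⌊t⌋₊ ! : ℝ)) ^ 3 := by
    rw [prod_Icc_div_pow, ← pow_mul, mul_comm, pow_mul, div_pow]
  simp only [hfactor, hY, hscale]
  refine ⟨?_, ?_, fun k hk _ => ?_⟩
  · rw [show exp (-6) = exp (-2) ^ 3 by rw [← exp_nat_mul]; norm_num, ← mul_pow]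
    gcongr
    exact exp_neg_two_mul_le_pow_floor_div_factorial ht
  · rw [one_mul]
    exact pow_le_pow_left₀ (by positivity) (pow_floor_div_factorial_le ht) 3
  · have hone : ∀ j ∈ Icc 1 ⌊t⌋₊, 1 ≤ t ^ 3 / (j : ℝ) ^ 3 := by
      intro j hj
      obtain ⟨hj1, hjN⟩ := mem_Icc.1 hj
      have hjt : (j : ℝ) ≤ t := (Nat.cast_le.2 hjN).trans (Nat.floor_le (by linarith))
      rw [one_le_div (pow_pos (by exact_mod_cast hj1) 3)]
      gcongr
    rw [← hY]
    exact prod_le_prod_of_subset_of_one_le (Icc_subset_Icc (by omega) le_rfl)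
      (fun j hj => zero_le_one.trans (hone j (Icc_subset_Icc (by omega) le_rfl hj)))
      (fun j hj _ => hone j hj)
end

section
/- Let b ∈ (0,1), t_{in} > 0, μ_∞ > 0 and μ(t) = μ_∞(1 + (t_{in}/t)^b) for t ≥ t_{in}. Suppose 1 ≤ k, τ ≤ t, and τ ≥ c₀ k t/(k+1) for some c₀ ∈ (1/2, 1] (i.e. τ is comparable to kt/(k+1)). Then μ(t) − μ(τ) ≤ −c · t_{in}^b · t^{−b}/(k+1) for a constant c > 0 depending only on μ_∞, b, c₀. -/
open Real

/-! The drop is `μ_∞ t_in^b (τ^{-b} - t^{-b})`. Since `τ ≤ kt/(k+1)`, `τ^{-b} ≥ (1 + 1/k)^b t^{-b}`,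
and concavity of `x ↦ x^b` between `1` and `2` gives `(1 + 1/k)^b ≥ 1 + (2^b - 1)/k`, so the drop is
at least `μ_∞ (2^b - 1) t_in^b t^{-b}/(k+1)`. -/

lemma one_add_mul_le_one_add_rpow {b s : ℝ} (hb0 : 0 ≤ b) (hb1 : b ≤ 1) (hs0 : 0 ≤ s)
    (hs1 : s ≤ 1) : 1 + (2 ^ b - 1) * s ≤ (1 + s) ^ b := by
  have h := (concaveOn_rpow hb0 hb1).2 (Set.mem_Ici.2 zero_le_one)
    (Set.mem_Ici.2 zero_le_two) (sub_nonneg.2 hs1) hs0 (sub_add_cancel 1 s)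
  simp only [smul_eq_mul, one_rpow, mul_one] at h
  rwa [show 1 - s + s * 2 = 1 + s by ring, show 1 - s + s * 2 ^ b = 1 + (2 ^ b - 1) * s by ring]
    at h

lemma one_add_div_succ_le_succ_div_rpow {b k : ℝ} (hb0 : 0 ≤ b) (hb1 : b ≤ 1) (hk : 1 ≤ k) :
    1 + (2 ^ b - 1) / (k + 1) ≤ ((k + 1) / k) ^ b := by
  have hk0 : 0 < k := by linarith
  have h2b : 0 ≤ (2 : ℝ) ^ b - 1 := sub_nonneg.2 (one_le_rpow one_le_two hb0)
  calc 1 + (2 ^ b - 1) / (k + 1) ≤ 1 + (2 ^ b - 1) * (1 / k) := by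
        rw [← div_eq_mul_one_div]
        gcongr
        linarith
    _ ≤ (1 + 1 / k) ^ b :=
        one_add_mul_le_one_add_rpow hb0 hb1 (by positivity) ((div_le_one hk0).2 hk)
    _ = ((k + 1) / k) ^ b := by rw [one_add_div hk0.ne', add_comm]

lemma mul_rpow_neg_div_le_rpow_neg_sub_rpow_neg {b k τ t : ℝ} (hb0 : 0 ≤ b) (hb1 : b ≤ 1)
    (hk : 1 ≤ k) (hτ : 0 < τ) (hτt : τ ≤ k * t / (k + 1)) :
    (2 ^ b - 1) * t ^ (-b) / (k + 1) ≤ τ ^ (-b) - t ^ (-b) := by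
  have hk0 : 0 < k := by linarith
  have ht : 0 ≤ t := by
    have : 0 ≤ k * t / (k + 1) := hτ.le.trans hτt
    rw [mul_div_right_comm] at this
    exact nonneg_of_mul_nonneg_right this (by positivity)
  have hscale : (k * t / (k + 1)) ^ (-b) = ((k + 1) / k) ^ b * t ^ (-b) := by
    rw [mul_div_right_comm, mul_rpow (by positivity) ht, rpow_neg (by positivity), ← inv_rpow
      (by positivity), inv_div]
  have hτb : ((k + 1) / k) ^ b * t ^ (-b) ≤ τ ^ (-b) :=
    hscale ▸ rpow_le_rpow_of_nonpos hτ hτt (neg_nonpos.2 hb0)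
  have hchord := one_add_div_succ_le_succ_div_rpow hb0 hb1 hk
  have htb : 0 ≤ t ^ (-b) := rpow_nonneg ht _
  calc (2 ^ b - 1) * t ^ (-b) / (k + 1) = (1 + (2 ^ b - 1) / (k + 1)) * t ^ (-b) - t ^ (-b) := by
        ring
    _ ≤ ((k + 1) / k) ^ b * t ^ (-b) - t ^ (-b) := by gcongr
    _ ≤ τ ^ (-b) - t ^ (-b) := by gcongr

theorem gevrey_index_drop_general (b tin μinf c₀ : ℝ)
    (hb0 : 0 < b) (hb1 : b < 1) (htin : 0 < tin) (hμ : 0 < μinf) :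
    ∃ c : ℝ, 0 < c ∧ ∀ (k : ℕ) (τ t : ℝ), 1 ≤ k → 1 ≤ τ → τ ≤ t → tin ≤ τ →
      c₀ * ((k : ℝ) * t / ((k : ℝ) + 1)) ≤ τ → τ ≤ (k : ℝ) * t / ((k : ℝ) + 1) →
      μinf * (1 + (tin / t) ^ b) - μinf * (1 + (tin / τ) ^ b)
        ≤ -(c * tin ^ b * t ^ (-b) / ((k : ℝ) + 1)) := by
  have h2b : 0 < (2 : ℝ) ^ b - 1 := sub_pos.2 (one_lt_rpow one_lt_two hb0)
  refine ⟨μinf * (2 ^ b - 1), by positivity, fun k τ t hk hτ hτt _ _ hτk => ?_⟩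
  have hτ0 : 0 < τ := by linarith
  have hpow {s : ℝ} (hs : 0 ≤ s) : (tin / s) ^ b = tin ^ b * s ^ (-b) := by
    rw [div_rpow htin.le hs, rpow_neg hs, div_eq_mul_inv]
  have hdrop := mul_rpow_neg_div_le_rpow_neg_sub_rpow_neg hb0.le hb1.le
    (Nat.one_le_cast.2 hk) hτ0 hτk
  rw [hpow hτ0.le, hpow (hτ0.le.trans hτt)]
  have := mul_le_mul_of_nonneg_left hdrop (by positivity : 0 ≤ μinf * tin ^ b)
  linarith [show μinf * tin ^ b * ((2 ^ b - 1) * t ^ (-b) / (k + 1))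
    = μinf * (2 ^ b - 1) * tin ^ b * t ^ (-b) / (k + 1) by ring]

/-- Drop of the time-dependent Gevrey index `μ(t) = μ_∞(1 + (t_in/t)^b)` between a
resonant time `τ ≈ kt/(k+1)` and `t`:
`μ(t) - μ(τ) ≤ -c t_in^b t^{-b}/(k+1)` with `c = c(μ_∞, b, c₀) > 0`. -/
theorem gevrey_index_drop (b tin μinf c₀ : ℝ)
    (hb0 : 0 < b) (hb1 : b < 1) (htin : 0 < tin) (hμ : 0 < μinf)
    (hc₀l : 1 / 2 < c₀) (hc₀u : c₀ ≤ 1) :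
    ∃ c : ℝ, 0 < c ∧ ∀ (k : ℕ) (τ t : ℝ), 1 ≤ k → 1 ≤ τ → τ ≤ t → tin ≤ τ →
      c₀ * ((k : ℝ) * t / ((k : ℝ) + 1)) ≤ τ → τ ≤ (k : ℝ) * t / ((k : ℝ) + 1) →
      μinf * (1 + (tin / t) ^ b) - μinf * (1 + (tin / τ) ^ b)
        ≤ -(c * tin ^ b * t ^ (-b) / ((k : ℝ) + 1)) :=
  gevrey_index_drop_general b tin μinf c₀ hb0 hb1 htin hμ
end

section
/- Let ε, K, δ' > 0 with K ε ξ ≥ 1, let N(η) = ⌊(K ε |η|)^{1/3}⌋, and suppose η, ξ > 0 satisfy |η − ξ| ≤ (1/1000)(K ε)^{2/3}(η^{2/3} + ξ^{2/3}) and N(η) = N(ξ). Then | (ξ/η)^{2N(η)} − 1 | ≤ C (K ε)^{1/3} |η − ξ| / ⟨η⟩^{2/3} · e^{c (K ε)^{1/3} ⟨η − ξ⟩^{1/3}} for universal constants C, c > 0. -/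
/-!
Write `A = (Kε)^{1/3}`, `η = u³`, `ξ = v³`, so that `N = ⌊Au⌋ = ⌊Av⌋` and `(ξ/η)^{2N} = (Av/Au)^{6N}`.
Since `N ≤ min(Au, Av)` and `|Av - Au| < 1`, the exponent `6N log(Av/Au)` is at most `6|Av - Au|`,
hence bounded, and `|e^x - 1| ≤ |x| e^{|x|}` gives `|(ξ/η)^{2N} - 1| ≲ A|v - u| ≤ A|η - ξ|/u²`.
Finally `Kεξ ≥ 1` forces `N ≥ 1`, i.e. `A³η ≥ 1`, so `⟨η⟩^{2/3} ≤ (1 + A)² η^{2/3} ≤ e^{2A} η^{2/3}`.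
-/

open Real

theorem abs_exp_sub_one_le_mul_exp_abs (x : ℝ) : |exp x - 1| ≤ |x| * exp |x| := by
  rcases le_or_gt 0 x with hx | hx
  · have hinv : 1 - x ≤ (exp x)⁻¹ := by rw [← exp_neg]; linarith [add_one_le_exp (-x)]
    have hmul : exp x * (1 - x) ≤ 1 := by
      simpa [exp_ne_zero] using mul_le_mul_of_nonneg_left hinv (exp_pos x).le
    rw [abs_of_nonneg hx, abs_of_nonneg (by linarith [add_one_le_exp x])]
    linarith
  · rw [abs_of_neg hx, abs_of_neg (by simpa using hx), neg_sub]
    nlinarith [add_one_le_exp x, one_le_exp (neg_nonneg.2 hx.le)]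

theorem abs_log_sub_log_le {a b : ℝ} (ha : 0 < a) (hb : 0 < b) :
    |log a - log b| ≤ |a - b| / min a b := by
  wlog hab : a ≤ b generalizing a b
  · rw [abs_sub_comm, abs_sub_comm a, min_comm]
    exact this hb ha (le_of_not_ge hab)
  rw [abs_sub_comm, abs_sub_comm a, abs_of_nonneg (sub_nonneg.2 (log_le_log ha hab)),
    abs_of_nonneg (sub_nonneg.2 hab), min_eq_left hab, ← log_div hb.ne' ha.ne', sub_div,
    div_self ha.ne']
  exact log_le_sub_one_of_pos (div_pos hb ha)

theorem abs_div_pow_mul_sub_one_le {a b : ℝ} (ha : 0 < a) (hb : 0 < b) (k : ℕ) {n : ℕ}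
    (hna : n ≤ a) (hnb : n ≤ b) :
    |(b / a) ^ (k * n) - 1| ≤ k * |b - a| * exp (k * |b - a|) := by
  set X : ℝ := (k * n : ℕ) * log (b / a)
  have hX : |X| ≤ k * |b - a| := by
    have hmin : (n : ℝ) ≤ min b a := le_min hnb hna
    calc |X| = k * (n * |log b - log a|) := by
            rw [abs_mul, log_div hb.ne' ha.ne', Nat.abs_cast]; push_cast; ring
      _ ≤ k * |b - a| := by
        gcongr
        calc (n : ℝ) * |log b - log a| ≤ min b a * (|b - a| / min b a) := by
              gcongr; exact abs_log_sub_log_le hb ha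
          _ = |b - a| := mul_div_cancel₀ _ (lt_min hb ha).ne'
  rw [← exp_log (div_pos hb ha), ← exp_nat_mul]
  calc |exp X - 1| ≤ |X| * exp |X| := abs_exp_sub_one_le_mul_exp_abs X
    _ ≤ _ := by gcongr

theorem abs_div_pow_mul_floor_sub_one_le {a b : ℝ} (ha : 0 < a) (hb : 0 < b)
    (h : ⌊a⌋₊ = ⌊b⌋₊) (k : ℕ) : |(b / a) ^ (k * ⌊a⌋₊) - 1| ≤ k * exp k * |b - a| := by
  have hab : |b - a| < 1 := by
    apply Int.abs_sub_lt_one_of_floor_eq_floor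
    rw [← Int.natCast_floor_eq_floor hb.le, ← Int.natCast_floor_eq_floor ha.le, h]
  calc |(b / a) ^ (k * ⌊a⌋₊) - 1| ≤ k * |b - a| * exp (k * |b - a|) :=
        abs_div_pow_mul_sub_one_le ha hb k (Nat.floor_le ha.le) (h ▸ Nat.floor_le hb.le)
    _ ≤ k * |b - a| * exp k := by gcongr; exact mul_le_of_le_one_right (by positivity) hab.le
    _ = k * exp k * |b - a| := by ring

theorem abs_sub_mul_sq_le_abs_pow_three_sub {u v : ℝ} (hu : 0 ≤ u) (hv : 0 ≤ v) :
    |u - v| * u ^ 2 ≤ |u ^ 3 - v ^ 3| := by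
  rw [show u ^ 3 - v ^ 3 = (u - v) * (u ^ 2 + u * v + v ^ 2) by ring, abs_mul,
    abs_of_nonneg (a := u ^ 2 + u * v + v ^ 2) (by positivity)]
  gcongr
  nlinarith [mul_nonneg hu hv, sq_nonneg v]

theorem one_add_sq_rpow_one_third_le {A u : ℝ} (hA : 0 ≤ A) (hAu : 1 ≤ A * u) :
    (1 + (u ^ 3) ^ 2) ^ ((1 : ℝ) / 3) ≤ (1 + A) ^ 2 * u ^ 2 := by
  rw [one_div, rpow_inv_le_iff_of_pos (by positivity) (by positivity) three_pos]
  have h6 : 1 + A ^ 6 ≤ (1 + A) ^ 6 := by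
    simpa using pow_add_pow_le zero_le_one hA (by norm_num : 6 ≠ 0)
  have hAu6 : 1 ≤ (A * u) ^ 6 := one_le_pow₀ hAu
  calc 1 + (u ^ 3) ^ 2 ≤ (1 + A ^ 6) * u ^ 6 := by nlinarith
    _ ≤ (1 + A) ^ 6 * u ^ 6 := by gcongr
    _ = ((1 + A) ^ 2 * u ^ 2) ^ (3 : ℝ) := by norm_cast; ring

theorem abs_mul_sub_mul_le_of_one_le_mul {A u v : ℝ} (hA : 0 < A) (hu : 0 ≤ u) (hv : 0 ≤ v)
    (hAu : 1 ≤ A * u) :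
    |A * v - A * u| ≤ A * |u ^ 3 - v ^ 3| / (1 + (u ^ 3) ^ 2) ^ ((1 : ℝ) / 3) * (1 + A) ^ 2 := by
  rw [div_mul_eq_mul_div, le_div_iff₀ (by positivity)]
  calc |A * v - A * u| * (1 + (u ^ 3) ^ 2) ^ ((1 : ℝ) / 3)
        ≤ |A * v - A * u| * ((1 + A) ^ 2 * u ^ 2) := by
        gcongr; exact one_add_sq_rpow_one_third_le hA.le hAu
    _ = (1 + A) ^ 2 * A * (|u - v| * u ^ 2) := by
        rw [← mul_sub, abs_mul, abs_of_pos hA, abs_sub_comm]; ring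
    _ ≤ (1 + A) ^ 2 * A * |u ^ 3 - v ^ 3| := by
        gcongr; exact abs_sub_mul_sq_le_abs_pow_three_sub hu hv
    _ = _ := by ring

theorem one_add_sq_le_exp_two_mul {x : ℝ} (hx : 0 ≤ x) : (1 + x) ^ 2 ≤ exp (2 * x) := by
  calc (1 + x) ^ 2 ≤ exp x ^ 2 := by gcongr; linarith [add_one_le_exp x]
    _ = exp (2 * x) := by rw [← exp_nat_mul]; norm_num

theorem rpow_one_third_mul_pow_three {c u : ℝ} (hc : 0 ≤ c) (hu : 0 ≤ u) :
    (c * u ^ 3) ^ ((1 : ℝ) / 3) = c ^ ((1 : ℝ) / 3) * u := by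
  rw [mul_rpow hc (by positivity), one_div]
  congr
  exact_mod_cast pow_rpow_inv_natCast hu three_ne_zero

theorem exists_pos_pow_three_eq {x : ℝ} (hx : 0 < x) : ∃ u, 0 < u ∧ u ^ 3 = x :=
  ⟨x ^ ((3 : ℕ)⁻¹ : ℝ), by positivity, rpow_inv_natCast_pow hx.le three_ne_zero⟩

/-- Commutator-type estimate on ratios of echo growth factors: if `N(η) = N(ξ)` where
`N(η) = ⌊(Kε|η|)^{1/3}⌋`, `Kεξ ≥ 1`, and `|η - ξ| ≤ (1/1000)(Kε)^{2/3}(η^{2/3}+ξ^{2/3})`,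
then `|(ξ/η)^{2N(η)} - 1| ≤ C (Kε)^{1/3}|η-ξ|/⟨η⟩^{2/3} e^{c(Kε)^{1/3}⟨η-ξ⟩^{1/3}}`
for universal `C, c > 0`. -/
theorem growth_ratio_commutator :
    ∃ C c : ℝ, 0 < C ∧ 0 < c ∧
      ∀ ε K δ' η ξ : ℝ, 0 < ε → 0 < K → 0 < δ' → 0 < η → 0 < ξ →
        1 ≤ K * ε * ξ →
        |η - ξ| ≤ (1 / 1000) * (K * ε) ^ ((2:ℝ)/3) * (η ^ ((2:ℝ)/3) + ξ ^ ((2:ℝ)/3)) →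
        Nat.floor ((K * ε * |η|) ^ ((1:ℝ)/3)) = Nat.floor ((K * ε * |ξ|) ^ ((1:ℝ)/3)) →
        |(ξ / η) ^ (2 * Nat.floor ((K * ε * |η|) ^ ((1:ℝ)/3))) - 1|
          ≤ C * (K * ε) ^ ((1:ℝ)/3) * |η - ξ| / (1 + η ^ 2) ^ ((1:ℝ)/3) *
              Real.exp (c * (K * ε) ^ ((1:ℝ)/3) * (1 + (η - ξ) ^ 2) ^ ((1:ℝ)/6)) := by
  refine ⟨6 * exp 6, 2, by positivity, two_pos, ?_⟩
  intro ε K _ η ξ hε hK _ hη hξ hKεξ _ hfloor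
  have hKε : 0 < K * ε := mul_pos hK hε
  obtain ⟨u, hu, rfl⟩ := exists_pos_pow_three_eq hη
  obtain ⟨v, hv, rfl⟩ := exists_pos_pow_three_eq hξ
  rw [abs_of_pos hη, abs_of_pos hξ, rpow_one_third_mul_pow_three hKε.le hu.le,
    rpow_one_third_mul_pow_three hKε.le hv.le] at hfloor
  rw [abs_of_pos hη, rpow_one_third_mul_pow_three hKε.le hu.le]
  set A := (K * ε) ^ ((1 : ℝ) / 3)
  have hA : 0 < A := by positivity
  have hAv : 1 ≤ A * v := by
    rw [← rpow_one_third_mul_pow_three hKε.le hv.le]; exact one_le_rpow hKεξ (by norm_num)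
  have hAu : 1 ≤ A * u := by
    have hN : 1 ≤ ⌊A * u⌋₊ := hfloor ▸ Nat.le_floor (by exact_mod_cast hAv)
    exact le_trans (by exact_mod_cast hN) (Nat.floor_le (by positivity))
  have hratio : v ^ 3 / u ^ 3 = (A * v / (A * u)) ^ 3 := by
    rw [mul_div_mul_left _ _ hA.ne', div_pow]
  have hm : 1 ≤ (1 + (u ^ 3 - v ^ 3) ^ 2) ^ ((1 : ℝ) / 6) :=
    one_le_rpow (by nlinarith) (by norm_num)
  calc |(v ^ 3 / u ^ 3) ^ (2 * ⌊A * u⌋₊) - 1|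
        = |(A * v / (A * u)) ^ (6 * ⌊A * u⌋₊) - 1| := by rw [hratio, ← pow_mul]; ring_nf
    _ ≤ 6 * exp 6 * |A * v - A * u| := by
        exact_mod_cast abs_div_pow_mul_floor_sub_one_le (by positivity) (by positivity) hfloor 6
    _ ≤ _ := by
        grw [abs_mul_sub_mul_le_of_one_le_mul hA hu.le hv.le hAu, one_add_sq_le_exp_two_mul hA.le,
          ← le_mul_of_one_le_right (by positivity) hm]
        exact le_of_eq (by ring)
end

section
/- Let 0 < ξ ≤ η, K, ε > 0 with 2(K ε ξ)^{1/3} ≥ 1 and suppose |η − ξ| ≤ ξ / 2. Let n = n(η,ξ) be a positive integer with n ≤ 2 (K ε ξ)^{1/3}. Then 1 ≤ (η/ξ)^{2n} ≤ e^{c (K ε (η − ξ))^{1/3}} for a universal constant c > 0 independent of K, ε, ξ, η, n. -/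
open Real

/-! The ratio `η/ξ = 1 + (η - ξ)/ξ` is at most `exp ((η - ξ)/ξ)`, so `(η/ξ)^{2n} ≤ exp (2n (η - ξ)/ξ)`.
Since `n ≲ (Kεξ)^{1/3}`, the exponent is `≲ (Kεξ)^{1/3} (η - ξ)/ξ = (Kε(η - ξ))^{1/3} ((η - ξ)/ξ)^{2/3}`,
and the last factor is at most `1`. -/

lemma rpow_one_third_pow_three {x : ℝ} (hx : 0 ≤ x) : (x ^ (1 / 3 : ℝ)) ^ 3 = x := by
  rw [one_div, show (3 : ℝ) = (3 : ℕ) by norm_num, Real.rpow_inv_natCast_pow hx three_ne_zero]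

lemma rpow_one_third_mul_div_le {C s d : ℝ} (hC : 0 ≤ C) (hs : 0 < s) (hd : 0 ≤ d)
    (hds : d ≤ s) : (C * s) ^ (1 / 3 : ℝ) * (d / s) ≤ (C * d) ^ (1 / 3 : ℝ) := by
  rw [← pow_le_pow_iff_left₀ (by positivity) (by positivity) three_ne_zero, mul_pow,
    rpow_one_third_pow_three (by positivity), rpow_one_third_pow_three (by positivity)]
  have hq : (d / s) ^ 2 ≤ 1 := pow_le_one₀ (by positivity) (div_le_one_of_le₀ hds hs.le)
  calc C * s * (d / s) ^ 3 = C * d * (d / s) ^ 2 := by field_simp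
    _ ≤ C * d := mul_le_of_le_one_right (by positivity) hq

lemma div_pow_le_exp {ξ η : ℝ} (hξ : 0 < ξ) (hη : 0 ≤ η) (m : ℕ) :
    (η / ξ) ^ m ≤ exp (m * ((η - ξ) / ξ)) := by
  have hratio : η / ξ ≤ exp ((η - ξ) / ξ) := by
    calc η / ξ = (η - ξ) / ξ + 1 := by field_simp; ring
      _ ≤ exp ((η - ξ) / ξ) := add_one_le_exp _
  calc (η / ξ) ^ m ≤ exp ((η - ξ) / ξ) ^ m := by gcongr
    _ = exp (m * ((η - ξ) / ξ)) := (exp_nat_mul _ _).symm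

/-- Comparison of echo weights at nearby frequencies: if `0 < ξ ≤ η`, `|η - ξ| ≤ ξ/2`,
`2(Kεξ)^{1/3} ≥ 1`, and `1 ≤ n ≤ 2(Kεξ)^{1/3}`, then
`1 ≤ (η/ξ)^{2n} ≤ e^{c(Kε(η-ξ))^{1/3}}` for a universal constant `c > 0`. -/
theorem weight_ratio_gevrey :
    ∃ c : ℝ, 0 < c ∧
      ∀ (K ε ξ η : ℝ) (n : ℕ), 0 < K → 0 < ε → 0 < ξ → ξ ≤ η →
        1 ≤ 2 * (K * ε * ξ) ^ ((1:ℝ)/3) → |η - ξ| ≤ ξ / 2 →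
        1 ≤ n → (n : ℝ) ≤ 2 * (K * ε * ξ) ^ ((1:ℝ)/3) →
        1 ≤ (η / ξ) ^ (2 * n) ∧
        (η / ξ) ^ (2 * n) ≤ Real.exp (c * (K * ε * (η - ξ)) ^ ((1:ℝ)/3)) := by
  refine ⟨4, by norm_num, fun K ε ξ η n hK hε hξ hξη _ hclose _ hn => ⟨?_, ?_⟩⟩
  · exact one_le_pow₀ ((one_le_div hξ).mpr hξη)
  have hd : 0 ≤ η - ξ := sub_nonneg.mpr hξη
  have hdξ : η - ξ ≤ ξ := by rw [abs_of_nonneg hd] at hclose; linarith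
  calc (η / ξ) ^ (2 * n) ≤ exp (((2 * n : ℕ) : ℝ) * ((η - ξ) / ξ)) :=
        div_pow_le_exp hξ (hξ.le.trans hξη) _
    _ ≤ exp (4 * ((K * ε * ξ) ^ ((1:ℝ)/3) * ((η - ξ) / ξ))) := by
        gcongr exp ?_
        rw [← mul_assoc]
        exact mul_le_mul_of_nonneg_right (by push_cast; linarith) (div_nonneg hd hξ.le)
    _ ≤ exp (4 * (K * ε * (η - ξ)) ^ ((1:ℝ)/3)) := by
        gcongr exp (4 * ?_)
        exact rpow_one_third_mul_div_le (by positivity) hξ hd hdξ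
end
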